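/- Let F_{S1} := x0^9 + (x1^3 − x2^3)·(x2^3 − x3^3)·(x3^3 − x1^3), F_{S2} := F_{S1}·(x0^9 − x1^3·x2^3·x3^3) + x1^6·x2^6·x3^6, and G2 := x0^21 + x1^21 + x2^21 − x3^21 in ℂ[x0, x1, x2, x3]. Then for all t0, t1 ∈ ℂ with t1 ≠ 0, the polynomial t0·F_{S2}·(x2^3 − x3^3) + t1·(G2 − F_{S2}·(x2^3 − x3^3)) is irreducible in ℂ[x0, x1, x2, x3]. -/
import Mathlib


open MvPolynomial

/-- The homogeneous degree-9 polynomial defining the surface `S1 ⊂ ℙ³_ℂ`. -/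
noncomputable def FS1 : MvPolynomial (Fin 4) ℂ :=
  X 0 ^ 9 + (X 1 ^ 3 - X 2 ^ 3) * (X 2 ^ 3 - X 3 ^ 3) * (X 3 ^ 3 - X 1 ^ 3)

/-- The homogeneous degree-18 polynomial defining the surface `S2 ⊂ ℙ³_ℂ`. -/
noncomputable def FS2 : MvPolynomial (Fin 4) ℂ :=
  FS1 * (X 0 ^ 9 - X 1 ^ 3 * X 2 ^ 3 * X 3 ^ 3) + X 1 ^ 6 * X 2 ^ 6 * X 3 ^ 6

/-- The homogeneous degree-21 polynomial `G2 = x0²¹ + x1²¹ + x2²¹ − x3²¹`. -/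
noncomputable def G2 : MvPolynomial (Fin 4) ℂ :=
  X 0 ^ 21 + X 1 ^ 21 + X 2 ^ 21 - X 3 ^ 21

namespace Stmt15Aux

abbrev R4 := MvPolynomial (Fin 4) ℂ

/-- If a product is a monomial `c·Xⁿ` with `c ≠ 0`, over a domain, then each factor has
equal trailing and leading degrees. -/
lemma trail_eq_deg {R : Type*} [CommRing R] [IsDomain R] {p q : Polynomial R} {c : R} {n : ℕ}
    (hc : c ≠ 0) (h : p * q = Polynomial.C c * Polynomial.X ^ n) :
    p.natTrailingDegree = p.natDegree := by
  have hm : p * q = Polynomial.monomial n c := by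
    rw [h, Polynomial.C_mul_X_pow_eq_monomial]
  have hpq : p * q ≠ 0 := by rw [hm]; simpa using hc
  have hp : p ≠ 0 := left_ne_zero_of_mul hpq
  have hq : q ≠ 0 := right_ne_zero_of_mul hpq
  have h1 : p.natDegree + q.natDegree = n := by
    classical
    rw [← Polynomial.natDegree_mul hp hq, hm, Polynomial.natDegree_monomial, if_neg hc]
  have h2 : p.natTrailingDegree + q.natTrailingDegree = n := by
    rw [← Polynomial.natTrailingDegree_mul hp hq, hm, Polynomial.natTrailingDegree_monomial hc]
  have l1 := p.natTrailingDegree_le_natDegree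
  have l2 := q.natTrailingDegree_le_natDegree
  omega

/-- The grading map: `X i ↦ (X i)·T`. -/
noncomputable def Dg : R4 →ₐ[ℂ] Polynomial R4 :=
  aeval (fun i => Polynomial.C (X i) * Polynomial.X)

lemma eval_one_Dg (p : R4) : Polynomial.eval (1 : R4) (Dg p) = p := by
  have h : (Polynomial.evalRingHom (1 : R4)).comp (Dg : R4 →+* Polynomial R4)
      = RingHom.id R4 := by
    apply MvPolynomial.ringHom_ext
    · intro r; simp [Dg, Polynomial.algebraMap_apply]
    · intro i; simp [Dg]
  exact RingHom.congr_fun h p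

lemma eval_zero_Dg (p : R4) : Polynomial.eval (0 : R4) (Dg p) = C (constantCoeff p) := by
  have h : (Polynomial.evalRingHom (0 : R4)).comp (Dg : R4 →+* Polynomial R4)
      = (C : ℂ →+* R4).comp (constantCoeff : R4 →+* ℂ) := by
    apply MvPolynomial.ringHom_ext
    · intro r; simp [Dg, Polynomial.algebraMap_apply]
    · intro i; simp [Dg]
  exact RingHom.congr_fun h p

/-- From a factorization of a polynomial `F` with `Dg F = C F * T^n`, each factor is either a
(nonzero) constant or has zero constant coefficient. -/
lemma const_or_constantCoeff_eq_zero {A B : R4} {n : ℕ} (hF : A * B ≠ 0)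
    (hD : Dg (A * B) = Polynomial.C (A * B) * Polynomial.X ^ n) :
    IsUnit A ∨ constantCoeff A = 0 := by
  have hD' : Dg A * Dg B = Polynomial.C (A * B) * Polynomial.X ^ n := by
    rw [← map_mul]; exact hD
  have ht := trail_eq_deg hF hD'
  rcases Nat.eq_zero_or_pos (Dg A).natDegree with h0 | hpos
  · -- A is a constant
    left
    have hC := Polynomial.eq_C_of_natDegree_eq_zero h0
    have e1 : A = (Dg A).coeff 0 := by
      conv_lhs => rw [← eval_one_Dg A]
      rw [hC]; simp
    have e2 : C (constantCoeff A) = (Dg A).coeff 0 := by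
      conv_lhs => rw [← eval_zero_Dg A]
      rw [hC]; simp
    have hAC : A = C (constantCoeff A) := e1.trans e2.symm
    have hA0 : A ≠ 0 := left_ne_zero_of_mul hF
    have hcc0 : constantCoeff A ≠ 0 := by
      intro h; apply hA0; rw [hAC, h, map_zero]
    refine isUnit_iff_exists_inv.mpr ⟨C (constantCoeff A)⁻¹, ?_⟩
    nth_rewrite 1 [hAC]
    rw [← map_mul, mul_inv_cancel₀ hcc0, map_one]
  · right
    have hcc : (Dg A).coeff 0 = 0 :=
      Polynomial.coeff_eq_zero_of_lt_natTrailingDegree (by omega)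
    have e2 : C (constantCoeff A) = (Dg A).coeff 0 := by
      rw [← eval_zero_Dg A, Polynomial.coeff_zero_eq_eval_zero]
    have : C (constantCoeff A) = (0 : R4) := by rw [e2, hcc]
    have := MvPolynomial.C_injective (Fin 4) ℂ (by simpa using this)
    simpa using this

/-- x₂-elimination step: if `u·v = t1·(x0²¹+x1²¹)` and `u` vanishes at `(0,0,0,1)`, then `u`
vanishes at `(0,0,1,1)`. -/
lemma vanish_step {t1 : ℂ} (ht1 : t1 ≠ 0) {u v : R4}
    (huv : u * v = C t1 * (X 0 ^ 21 + X 1 ^ 21))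
    (hu0 : eval ![0, 0, 0, 1] u = 0) :
    eval ![0, 0, 1, 1] u = 0 := by
  set g2 : Fin 4 → Polynomial R4 :=
    ![Polynomial.C (X 0), Polynomial.C (X 1), Polynomial.X, Polynomial.C (X 3)] with hg2
  have hW0 : (C t1 * (X 0 ^ 21 + X 1 ^ 21) : R4) ≠ 0 := by
    intro h
    have := congrArg (eval ![1, 0, 0, 0]) h
    simp at this
    exact ht1 this
  have hDW : aeval g2 (C t1 * (X 0 ^ 21 + X 1 ^ 21) : R4)
      = Polynomial.C (C t1 * (X 0 ^ 21 + X 1 ^ 21) : R4) := by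
    simp only [map_add, map_mul, map_pow, aeval_X, aeval_C, hg2, Matrix.cons_val_zero,
      Matrix.cons_val_one, Matrix.head_cons]
    rw [IsScalarTower.algebraMap_apply ℂ R4 (Polynomial R4)]
    simp only [MvPolynomial.algebraMap_eq, Polynomial.algebraMap_eq]
    try ring
  have hprod : aeval g2 u * aeval g2 v = Polynomial.C (C t1 * (X 0 ^ 21 + X 1 ^ 21) : R4) := by
    rw [← map_mul, huv, hDW]
  have hCW : (Polynomial.C (C t1 * (X 0 ^ 21 + X 1 ^ 21) : R4) : Polynomial R4) ≠ 0 :=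
    Polynomial.C_ne_zero.mpr hW0
  have hu' : aeval g2 u ≠ 0 := by
    intro h; apply hCW; rw [← hprod, h, zero_mul]
  have hv' : aeval g2 v ≠ 0 := by
    intro h; apply hCW; rw [← hprod, h, mul_zero]
  have hdeg : (aeval g2 u).natDegree = 0 := by
    have := Polynomial.natDegree_mul hu' hv'
    rw [hprod, Polynomial.natDegree_C] at this
    omega
  have hC := Polynomial.eq_C_of_natDegree_eq_zero hdeg
  have hcomp : ∀ z : ℂ, ∀ p : R4,
      Polynomial.eval₂ (MvPolynomial.eval ![0,0,0,1] : R4 →+* ℂ) z (aeval g2 p)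
        = eval ![0, 0, z, 1] p := by
    intro z p
    have h : (Polynomial.eval₂RingHom (MvPolynomial.eval ![(0:ℂ),0,0,1]) z).comp
        ((aeval g2 : R4 →ₐ[ℂ] Polynomial R4) : R4 →+* Polynomial R4)
        = (eval ![0, 0, z, 1] : R4 →+* ℂ) := by
      apply MvPolynomial.ringHom_ext
      · intro r; simp [Polynomial.algebraMap_apply]
      · intro i; fin_cases i <;> simp [hg2]
    exact RingHom.congr_fun h p
  have e1 : eval ![0, 0, 1, 1] u = MvPolynomial.eval ![0,0,0,1] ((aeval g2 u).coeff 0) := by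
    rw [← hcomp 1 u, hC]; simp
  have e0 : eval ![0, 0, 0, 1] u = MvPolynomial.eval ![0,0,0,1] ((aeval g2 u).coeff 0) := by
    rw [← hcomp 0 u, hC]; simp
  rw [e1, ← e0, hu0]

end Stmt15Aux

set_option maxHeartbeats 1600000 in
/-- Every member `t0·F_{S2}·(x2³−x3³) + t1·(G2 − F_{S2}·(x2³−x3³))` of the pencil with
`t1 ≠ 0` is irreducible in `ℂ[x0, x1, x2, x3]`. -/
theorem stmt_15 (t0 t1 : ℂ) (ht1 : t1 ≠ 0) :
    Irreducible (C t0 * (FS2 * (X 2 ^ 3 - X 3 ^ 3)) +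
      C t1 * (G2 - FS2 * (X 2 ^ 3 - X 3 ^ 3))) := by
  open Stmt15Aux in
  set F : R4 := C t0 * (FS2 * (X 2 ^ 3 - X 3 ^ 3)) +
      C t1 * (G2 - FS2 * (X 2 ^ 3 - X 3 ^ 3)) with hFdef
  -- the four substitution identities
  have idE' : aeval ![0, (Polynomial.X : Polynomial ℂ), 1, 1] F
      = Polynomial.C t1 * Polynomial.X ^ 21 := by
    rw [hFdef]
    simp only [FS1, FS2, G2, map_add, map_mul, map_sub, map_pow, aeval_X, aeval_C,
      Polynomial.algebraMap_eq, Matrix.cons_val_zero, Matrix.cons_val_one, Matrix.head_cons,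
      Matrix.cons_val_two, Matrix.tail_cons, Matrix.cons_val_three]
    ring
  have idE : aeval ![0, 0, 1, (Polynomial.X : Polynomial ℂ)] F
      = Polynomial.C t1 * (1 - Polynomial.X ^ 21) := by
    rw [hFdef]
    simp only [FS1, FS2, G2, map_add, map_mul, map_sub, map_pow, aeval_X, aeval_C,
      Polynomial.algebraMap_eq, Matrix.cons_val_zero, Matrix.cons_val_one, Matrix.head_cons,
      Matrix.cons_val_two, Matrix.tail_cons, Matrix.cons_val_three]
    ring
  have idPhi : aeval ((![X 0, X 1, X 2, X 2]) : Fin 4 → R4) F = C t1 * (X 0 ^ 21 + X 1 ^ 21) := by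
    rw [hFdef]
    simp only [FS1, FS2, G2, map_add, map_mul, map_sub, map_pow, aeval_X, aeval_C,
      MvPolynomial.algebraMap_eq, Matrix.cons_val_zero, Matrix.cons_val_one, Matrix.head_cons,
      Matrix.cons_val_two, Matrix.tail_cons, Matrix.cons_val_three]
    ring
  have idD : Stmt15Aux.Dg F = Polynomial.C F * Polynomial.X ^ 21 := by
    rw [hFdef]
    simp only [FS1, FS2, G2, Stmt15Aux.Dg, map_add, map_mul, map_sub, map_pow, aeval_X, aeval_C]
    rw [IsScalarTower.algebraMap_apply ℂ R4 (Polynomial R4),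
      IsScalarTower.algebraMap_apply ℂ R4 (Polynomial R4)]
    simp only [MvPolynomial.algebraMap_eq, Polynomial.algebraMap_eq]
    ring
  have hF0 : F ≠ 0 := by
    intro h
    rw [h, map_zero] at idE'
    have := congrArg (fun p => Polynomial.coeff p 21) idE'
    simp at this
    exact ht1 this.symm
  constructor
  · -- F is not a unit
    intro hu
    have h2 : IsUnit (aeval ![0, (Polynomial.X : Polynomial ℂ), 1, 1] F) :=
      hu.map (aeval ![0, (Polynomial.X : Polynomial ℂ), 1, 1] : R4 →ₐ[ℂ] Polynomial ℂ)
    rw [idE'] at h2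
    have h3 := Polynomial.natDegree_eq_zero_of_isUnit h2
    rw [Polynomial.natDegree_C_mul_X_pow 21 t1 ht1] at h3
    exact absurd h3 (by norm_num)
  · intro A B hAB
    by_contra hcon
    push_neg at hcon
    obtain ⟨hA, hB⟩ := hcon
    have hABne : A * B ≠ 0 := by rw [← hAB]; exact hF0
    -- constant coefficients vanish
    have hccA : constantCoeff A = 0 := by
      rcases Stmt15Aux.const_or_constantCoeff_eq_zero hABne (by rw [← hAB]; exact idD) with h | h
      · exact absurd h hA
      · exact h
    have hccB : constantCoeff B = 0 := by
      have hBA : B * A ≠ 0 := by rwa [mul_comm]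
      have idD' : Stmt15Aux.Dg (B * A) = Polynomial.C (B * A) * Polynomial.X ^ 21 := by
        rw [mul_comm B A, ← hAB]; exact idD
      rcases Stmt15Aux.const_or_constantCoeff_eq_zero hBA idD' with h | h
      · exact absurd h hB
      · exact h
    -- pass to the plane x3 = x2
    have hphiAB : aeval ((![X 0, X 1, X 2, X 2]) : Fin 4 → R4) A * aeval ((![X 0, X 1, X 2, X 2]) : Fin 4 → R4) B
        = C t1 * (X 0 ^ 21 + X 1 ^ 21) := by
      rw [← map_mul, ← hAB]; exact idPhi
    -- constant coeff of φ p relates to eval at (0,0,0,1)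
    have hphi0 : ∀ p : R4, eval ![0, 0, 0, 1] (aeval ((![X 0, X 1, X 2, X 2]) : Fin 4 → R4) p)
        = constantCoeff p := by
      intro p
      have h : ((eval ![0,0,0,1] : R4 →+* ℂ)).comp
          ((aeval ((![X 0, X 1, X 2, X 2]) : Fin 4 → R4) : R4 →ₐ[ℂ] R4) : R4 →+* R4)
          = (constantCoeff : R4 →+* ℂ) := by
        apply MvPolynomial.ringHom_ext
        · intro r; simp [MvPolynomial.algebraMap_eq]
        · intro i; fin_cases i <;> simp
      exact RingHom.congr_fun h p
    have hphi1 : ∀ p : R4, eval ![0, 0, 1, 1] (aeval ((![X 0, X 1, X 2, X 2]) : Fin 4 → R4) p)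
        = eval ![0, 0, 1, 1] p := by
      intro p
      have h : ((eval ![0,0,1,1] : R4 →+* ℂ)).comp
          ((aeval ((![X 0, X 1, X 2, X 2]) : Fin 4 → R4) : R4 →ₐ[ℂ] R4) : R4 →+* R4)
          = (eval ![0,0,1,1] : R4 →+* ℂ) := by
        apply MvPolynomial.ringHom_ext
        · intro r; simp [MvPolynomial.algebraMap_eq]
        · intro i; fin_cases i <;> simp
      exact RingHom.congr_fun h p
    have hA11 : eval ![0, 0, 1, 1] A = 0 := by
      rw [← hphi1 A]
      exact Stmt15Aux.vanish_step ht1 hphiAB (by rw [hphi0 A]; exact hccA)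
    have hB11 : eval ![0, 0, 1, 1] B = 0 := by
      rw [← hphi1 B]
      have hphiBA : aeval ((![X 0, X 1, X 2, X 2]) : Fin 4 → R4) B * aeval ((![X 0, X 1, X 2, X 2]) : Fin 4 → R4) A
          = C t1 * (X 0 ^ 21 + X 1 ^ 21) := by rwa [mul_comm]
      exact Stmt15Aux.vanish_step ht1 hphiBA (by rw [hphi0 B]; exact hccB)
    -- restrict to the line (0,0,1,Y) and get a double root at Y = 1
    have hEAB : aeval ![0, 0, 1, (Polynomial.X : Polynomial ℂ)] A *
        aeval ![0, 0, 1, (Polynomial.X : Polynomial ℂ)] B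
        = Polynomial.C t1 * (1 - Polynomial.X ^ 21) := by
      rw [← map_mul, ← hAB]; exact idE
    have hEeval : ∀ p : R4,
        Polynomial.eval 1 (aeval ![0, 0, 1, (Polynomial.X : Polynomial ℂ)] p)
          = eval ![0, 0, 1, 1] p := by
      intro p
      have h : (Polynomial.evalRingHom (1 : ℂ)).comp
          ((aeval ![0, 0, 1, (Polynomial.X : Polynomial ℂ)] : R4 →ₐ[ℂ] Polynomial ℂ) :
            R4 →+* Polynomial ℂ)
          = (eval ![0,0,1,1] : R4 →+* ℂ) := by
        apply MvPolynomial.ringHom_ext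
        · intro r; simp [Polynomial.algebraMap_apply]
        · intro i; fin_cases i <;> simp
      exact RingHom.congr_fun h p
    have hdvdA : (Polynomial.X - Polynomial.C 1) ∣
        aeval ![0, 0, 1, (Polynomial.X : Polynomial ℂ)] A :=
      Polynomial.dvd_iff_isRoot.mpr (by rw [Polynomial.IsRoot, hEeval A]; exact hA11)
    have hdvdB : (Polynomial.X - Polynomial.C 1) ∣
        aeval ![0, 0, 1, (Polynomial.X : Polynomial ℂ)] B :=
      Polynomial.dvd_iff_isRoot.mpr (by rw [Polynomial.IsRoot, hEeval B]; exact hB11)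
    have hdvd : (Polynomial.X - Polynomial.C 1) ^ 2 ∣
        Polynomial.C t1 * (1 - Polynomial.X ^ 21) := by
      rw [← hEAB, sq]
      exact mul_dvd_mul hdvdA hdvdB
    obtain ⟨k, hk⟩ := hdvd
    have hder := congrArg (fun p => Polynomial.eval 1 (Polynomial.derivative p)) hk
    simp [Polynomial.derivative_mul, Polynomial.derivative_pow, Polynomial.eval_mul,
      Polynomial.eval_add, Polynomial.eval_sub, Polynomial.eval_pow] at hder
    exact ht1 hder
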